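/- Let A = √(8/3). Suppose ρ₁, u₁⁽¹⁾, θ₁, φ₁, ρ₂, u₁⁽²⁾, θ₂, φ₂ are smooth real-valued functions of (t,x) ∈ ℝ×ℝ satisfying at every point the first-order relations u₁⁽¹⁾ = Aρ₁, θ₁ = (2/3)ρ₁, φ₁ = ρ₁, together with the two equations ∂ₜρ₁ − A∂ₓρ₂ + ∂ₓu₁⁽²⁾ + ∂ₓ(ρ₁u₁⁽¹⁾) = 0 and ∂ₜu₁⁽¹⁾ − A∂ₓu₁⁽²⁾ − Aρ₁∂ₓu₁⁽¹⁾ + u₁⁽¹⁾∂ₓu₁⁽¹⁾ + ∂ₓθ₂ + ∂ₓρ₂ + ∂ₓ(ρ₁θ₁) + ∂ₓφ₂ + ρ₁∂ₓφ₁ = 0. Then at every point −(5/3)∂ₓρ₂ + ∂ₓθ₂ + ∂ₓφ₂ + (23/3)ρ₁∂ₓρ₁ + 2A∂ₜρ₁ = 0. -/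

import Mathlib

/-!
Adding `A` times the mass equation to the momentum equation eliminates `∂ₓu₂`. After the
first-order relations are substituted, the remaining quadratic terms are multiples of
`ρ₁ ∂ₓρ₁` (by the product rule), and `A² = 8/3` turns the coefficients into `-5/3` and `23/3`.
-/

/-- Partial derivative in `t` of a function of `(t, x) : ℝ × ℝ`. -/
noncomputable def pdt (f : ℝ × ℝ → ℝ) (p : ℝ × ℝ) : ℝ :=
  deriv (fun s => f (s, p.2)) p.1

/-- Partial derivative in `x` of a function of `(t, x) : ℝ × ℝ`. -/
noncomputable def pdx (f : ℝ × ℝ → ℝ) (p : ℝ × ℝ) : ℝ :=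
  deriv (fun y => f (p.1, y)) p.2

theorem pdt_const_mul (c : ℝ) (f : ℝ × ℝ → ℝ) (p : ℝ × ℝ) :
    pdt (fun q => c * f q) p = c * pdt f p := by
  simp only [pdt, deriv_const_mul_field']

theorem pdx_const_mul (c : ℝ) (f : ℝ × ℝ → ℝ) (p : ℝ × ℝ) :
    pdx (fun q => c * f q) p = c * pdx f p := by
  simp only [pdx, deriv_const_mul_field']

theorem DifferentiableAt.comp_prodMk_right {f : ℝ × ℝ → ℝ} {p : ℝ × ℝ}
    (hf : DifferentiableAt ℝ f p) : DifferentiableAt ℝ (fun y => f (p.1, y)) p.2 :=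
  hf.comp p.2 ((differentiableAt_const _).prodMk differentiableAt_id)

theorem pdx_mul {f g : ℝ × ℝ → ℝ} {p : ℝ × ℝ} (hf : DifferentiableAt ℝ f p)
    (hg : DifferentiableAt ℝ g p) :
    pdx (fun q => f q * g q) p = pdx f p * g p + f p * pdx g p :=
  deriv_fun_mul hf.comp_prodMk_right hg.comp_prodMk_right

theorem second_order_momentum_density_relation_general
    (A : ℝ) (hA : A = Real.sqrt (8 / 3))
    (ρ₁ u₁ θ₁ φ₁ ρ₂ u₂ θ₂ φ₂ : ℝ × ℝ → ℝ)
    (hρ₁ : ContDiff ℝ (⊤ : ℕ∞) ρ₁)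
    (rel_u : ∀ p, u₁ p = A * ρ₁ p)
    (rel_θ : ∀ p, θ₁ p = (2 / 3) * ρ₁ p)
    (rel_φ : ∀ p, φ₁ p = ρ₁ p)
    (eq1 : ∀ p, pdt ρ₁ p - A * pdx ρ₂ p + pdx u₂ p
      + pdx (fun q => ρ₁ q * u₁ q) p = 0)
    (eq2 : ∀ p, pdt u₁ p - A * pdx u₂ p - A * ρ₁ p * pdx u₁ p + u₁ p * pdx u₁ p
      + pdx θ₂ p + pdx ρ₂ p + pdx (fun q => ρ₁ q * θ₁ q) p + pdx φ₂ p
      + ρ₁ p * pdx φ₁ p = 0) :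
    ∀ p, -(5 / 3) * pdx ρ₂ p + pdx θ₂ p + pdx φ₂ p
      + (23 / 3) * ρ₁ p * pdx ρ₁ p + 2 * A * pdt ρ₁ p = 0 := by
  intro p
  have hA_sq : A * A = 8 / 3 := by
    rw [hA]
    exact Real.mul_self_sqrt (by norm_num)
  have hu : u₁ = fun q => A * ρ₁ q := funext rel_u
  have hθ : θ₁ = fun q => (2 / 3) * ρ₁ q := funext rel_θ
  have hφ : φ₁ = ρ₁ := funext rel_φ
  subst u₁ θ₁ φ₁
  have hdiff : DifferentiableAt ℝ ρ₁ p := hρ₁.differentiable (by simp) p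
  have mass := eq1 p
  have momentum := eq2 p
  simp only [pdx_mul hdiff (hdiff.const_mul _), pdx_const_mul, pdt_const_mul] at mass momentum
  linear_combination A * mass + momentum + (pdx ρ₂ p - 2 * ρ₁ p * pdx ρ₁ p) * hA_sq

/-- combining the second-order mass and momentum equations
yields `−(5/3)∂ₓρ₂ + ∂ₓθ₂ + ∂ₓφ₂ + (23/3)ρ₁∂ₓρ₁ + 2A∂ₜρ₁ = 0`. -/
theorem second_order_momentum_density_relation
    (A : ℝ) (hA : A = Real.sqrt (8 / 3))
    (ρ₁ u₁ θ₁ φ₁ ρ₂ u₂ θ₂ φ₂ : ℝ × ℝ → ℝ)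
    (hρ₁ : ContDiff ℝ (⊤ : ℕ∞) ρ₁) (hu₁ : ContDiff ℝ (⊤ : ℕ∞) u₁)
    (hθ₁ : ContDiff ℝ (⊤ : ℕ∞) θ₁) (hφ₁ : ContDiff ℝ (⊤ : ℕ∞) φ₁)
    (hρ₂ : ContDiff ℝ (⊤ : ℕ∞) ρ₂) (hu₂ : ContDiff ℝ (⊤ : ℕ∞) u₂)
    (hθ₂ : ContDiff ℝ (⊤ : ℕ∞) θ₂) (hφ₂ : ContDiff ℝ (⊤ : ℕ∞) φ₂)
    (rel_u : ∀ p, u₁ p = A * ρ₁ p)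
    (rel_θ : ∀ p, θ₁ p = (2 / 3) * ρ₁ p)
    (rel_φ : ∀ p, φ₁ p = ρ₁ p)
    (eq1 : ∀ p, pdt ρ₁ p - A * pdx ρ₂ p + pdx u₂ p
      + pdx (fun q => ρ₁ q * u₁ q) p = 0)
    (eq2 : ∀ p, pdt u₁ p - A * pdx u₂ p - A * ρ₁ p * pdx u₁ p + u₁ p * pdx u₁ p
      + pdx θ₂ p + pdx ρ₂ p + pdx (fun q => ρ₁ q * θ₁ q) p + pdx φ₂ p
      + ρ₁ p * pdx φ₁ p = 0) :
    ∀ p, -(5 / 3) * pdx ρ₂ p + pdx θ₂ p + pdx φ₂ p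
      + (23 / 3) * ρ₁ p * pdx ρ₁ p + 2 * A * pdt ρ₁ p = 0 :=
  second_order_momentum_density_relation_general A hA ρ₁ u₁ θ₁ φ₁ ρ₂ u₂ θ₂ φ₂ hρ₁ rel_u rel_θ rel_φ
    eq1 eq2
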